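/- arXiv:2005.11921 — 2 statements merged into one kernel-verified Lean document; each statement's English description precedes it below -/
import Mathlib

section
/- Let J⁰, J¹, L⁰, L¹, M⁰, M¹, P⁰, P¹ be abelian groups, and for i ∈ {0,1} let σⁱ : Jⁱ → Mⁱ and τⁱ : Lⁱ → Mⁱ be group homomorphisms. Set Gⁱ := Jⁱ ⊕ Lⁱ ⊕ (⨁_{n≥1} Lⁱ) and Hⁱ := Mⁱ ⊕ (⨁_{n≥1} Lⁱ), and define Φⁱ : Gⁱ → Hⁱ by Φⁱ(j, a, (f_n)_{n≥1}) = (σⁱ(j) + τⁱ(a), f₁ − a, f₂ − f₁, f₃ − f₂, …). Suppose that κⁱ : Hⁱ → Pⁱ and ∂ⁱ : Pⁱ → G^{1−i} are group homomorphisms such that the cyclic six-term sequence G⁰ →^{Φ⁰} H⁰ →^{κ⁰} P⁰ →^{∂⁰} G¹ →^{Φ¹} H¹ →^{κ¹} P¹ →^{∂¹} G⁰ is exact at every term. Let ℓⁱ : Mⁱ → Hⁱ be the inclusion m ↦ (m, 0) and πⁱ : Gⁱ → Jⁱ the projection onto the first summand. Then the cyclic six-term sequence J⁰ →^{σ⁰}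 M⁰ →^{κ⁰∘ℓ⁰} P⁰ →^{π¹∘∂⁰} J¹ →^{σ¹} M¹ →^{κ¹∘ℓ¹} P¹ →^{π⁰∘∂¹} J⁰ is exact at every term. -/
open Finset

private lemma telescope_zero {L : Type*} [AddCommGroup L] (f : ℕ →₀ L) (a : L)
    (h0 : f 0 = a) (hs : ∀ n, f (n + 1) = f n) : a = 0 ∧ f = 0 := by
  have hall : ∀ n, f n = a := fun n => by
    induction n with
    | zero => exact h0
    | succ n ih => rw [hs n, ih]
  have hn : f.support.sup id + 1 ∉ f.support := fun h => by
    have := Finset.le_sup (f := id) h; simp only [id] at this; omega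
  have ha : a = 0 := by
    rw [← hall (f.support.sup id + 1)]
    exact Finsupp.notMem_support_iff.mp hn
  exact ⟨ha, Finsupp.ext fun m => by rw [hall m, ha, Finsupp.coe_zero, Pi.zero_apply]⟩

private lemma telescope_exists {L : Type*} [AddCommGroup L] (g : ℕ →₀ L) :
    ∃ (a : L) (f : ℕ →₀ L), (f 0 - a = g 0) ∧ ∀ n, f (n + 1) - f n = g (n + 1) := by
  set N := g.support.sup id + 1 with hN
  have hout : ∀ k, N ≤ k → g k = 0 := by
    intro k hk
    by_contra h
    have : k ≤ g.support.sup id := Finset.le_sup (f := id) (Finsupp.mem_support_iff.mpr h)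
    omega
  refine ⟨-∑ k ∈ Finset.range N, g k,
    Finsupp.onFinset (Finset.range N) (fun n => -∑ k ∈ Finset.Ico (n + 1) N, g k) ?_, ?_, ?_⟩
  · intro n hn
    by_contra h
    simp only [Finset.mem_range, not_lt] at h
    exact hn (by
      show -∑ k ∈ Finset.Ico (n + 1) N, g k = 0
      rw [Finset.Ico_eq_empty (by omega), Finset.sum_empty, neg_zero])
  · simp only [Finsupp.onFinset_apply]
    rw [Finset.range_eq_Ico, Finset.sum_eq_sum_Ico_succ_bot (by omega : 0 < N)]
    abel
  · intro n
    simp only [Finsupp.onFinset_apply]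
    by_cases h : n + 1 < N
    · rw [Finset.sum_eq_sum_Ico_succ_bot h]
      abel
    · rw [Finset.Ico_eq_empty (show ¬(n + 1 + 1) < N by omega),
        Finset.Ico_eq_empty (show ¬(n + 1) < N by omega),
        hout (n + 1) (by omega)]
      simp

private lemma three_exact
    {J L M P J' L' M' : Type*}
    [AddCommGroup J] [AddCommGroup L] [AddCommGroup M] [AddCommGroup P]
    [AddCommGroup J'] [AddCommGroup L'] [AddCommGroup M']
    (σ : J →+ M) (τ : L →+ M) (σ' : J' →+ M') (τ' : L' →+ M')
    (Φ : J × L × (ℕ →₀ L) →+ M × (ℕ →₀ L))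
    (hΦa : ∀ (j : J) (a : L) (f : ℕ →₀ L), (Φ (j, a, f)).1 = σ j + τ a)
    (hΦb : ∀ (j : J) (a : L) (f : ℕ →₀ L), (Φ (j, a, f)).2 0 = f 0 - a)
    (hΦc : ∀ (j : J) (a : L) (f : ℕ →₀ L) (n : ℕ),
      (Φ (j, a, f)).2 (n + 1) = f (n + 1) - f n)
    (Φ' : J' × L' × (ℕ →₀ L') →+ M' × (ℕ →₀ L'))
    (hΦ'a : ∀ (j : J') (a : L') (f : ℕ →₀ L'), (Φ' (j, a, f)).1 = σ' j + τ' a)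
    (hΦ'b : ∀ (j : J') (a : L') (f : ℕ →₀ L'), (Φ' (j, a, f)).2 0 = f 0 - a)
    (hΦ'c : ∀ (j : J') (a : L') (f : ℕ →₀ L') (n : ℕ),
      (Φ' (j, a, f)).2 (n + 1) = f (n + 1) - f n)
    (κ : M × (ℕ →₀ L) →+ P) (d : P →+ J' × L' × (ℕ →₀ L'))
    (hex1 : Function.Exact ⇑Φ ⇑κ)
    (hex2 : Function.Exact ⇑κ ⇑d)
    (hex3 : Function.Exact ⇑d ⇑Φ') :
    Function.Exact ⇑σ (fun m : M => κ (m, 0)) ∧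
    Function.Exact (fun m : M => κ (m, 0)) (fun p : P => (d p).1) ∧
    Function.Exact (fun p : P => (d p).1) ⇑σ' := by
  -- Φ (j, 0, 0) = (σ j, 0)
  have key1 : ∀ j : J, Φ (j, 0, 0) = (σ j, 0) := by
    intro j
    have h1 : (Φ (j, 0, 0)).1 = σ j := by rw [hΦa]; simp
    have h2 : (Φ (j, 0, 0)).2 = 0 := by
      ext n
      cases n with
      | zero => rw [hΦb]; simp
      | succ n => rw [hΦc]; simp
    exact Prod.ext h1 h2
  have key1' : ∀ j : J', Φ' (j, 0, 0) = (σ' j, 0) := by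
    intro j
    have h1 : (Φ' (j, 0, 0)).1 = σ' j := by rw [hΦ'a]; simp
    have h2 : (Φ' (j, 0, 0)).2 = 0 := by
      ext n
      cases n with
      | zero => rw [hΦ'b]; simp
      | succ n => rw [hΦ'c]; simp
    exact Prod.ext h1 h2
  -- if Φ'(d p) = 0 (always true) then second and third components of d p vanish
  have key2 : ∀ p : P, (d p).2.1 = 0 ∧ (d p).2.2 = 0 := by
    intro p
    have h0 : Φ' (d p) = 0 := hex3.apply_apply_eq_zero p
    have hrw : ((d p).1, (d p).2.1, (d p).2.2) = d p := rfl
    have hb := hΦ'b (d p).1 (d p).2.1 (d p).2.2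
    have hc := hΦ'c (d p).1 (d p).2.1 (d p).2.2
    rw [hrw, h0] at hb hc
    simp only [Prod.snd_zero, Finsupp.coe_zero, Pi.zero_apply] at hb hc
    exact telescope_zero (d p).2.2 (d p).2.1
      (sub_eq_zero.mp hb.symm) (fun n => sub_eq_zero.mp (hc n).symm)
  refine ⟨?_, ?_, ?_⟩
  · -- exact at M : σ then κ∘ℓ
    intro m
    constructor
    · intro h
      obtain ⟨⟨j, a, f⟩, hjf⟩ := (hex1 (m, (0 : ℕ →₀ L))).mp h
      have h2 : (Φ (j, a, f)).2 = 0 := by rw [hjf]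
      have hb := hΦb j a f
      have hc := hΦc j a f
      rw [h2] at hb hc
      simp only [Finsupp.coe_zero, Pi.zero_apply] at hb hc
      obtain ⟨ha, -⟩ := telescope_zero f a
        (sub_eq_zero.mp hb.symm) (fun n => sub_eq_zero.mp (hc n).symm)
      refine ⟨j, ?_⟩
      have h1 : (Φ (j, a, f)).1 = m := by rw [hjf]
      rw [hΦa, ha, map_zero, add_zero] at h1
      exact h1
    · rintro ⟨j, rfl⟩
      show κ (σ j, 0) = 0
      rw [← key1 j]
      exact hex1.apply_apply_eq_zero _
  · -- exact at P : κ∘ℓ then π∘d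
    intro p
    constructor
    · intro h
      replace h : (d p).1 = 0 := h
      obtain ⟨ha, hf⟩ := key2 p
      have hdp0 : d p = 0 := by
        have heq : d p = ((d p).1, (d p).2.1, (d p).2.2) := rfl
        rw [heq, h, ha, hf]
        rfl
      obtain ⟨⟨m, g⟩, hmg⟩ := (hex2 p).mp hdp0
      obtain ⟨a, f, hfa, hfs⟩ := telescope_exists g
      have hΦaf : Φ (0, a, f) = (τ a, g) := by
        have h1 : (Φ (0, a, f)).1 = τ a := by rw [hΦa]; simp
        have h2 : (Φ (0, a, f)).2 = g := by
          ext n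
          cases n with
          | zero => rw [hΦb]; exact hfa
          | succ n => rw [hΦc]; exact hfs n
        exact Prod.ext h1 h2
      refine ⟨m - τ a, ?_⟩
      have hz : κ (τ a, g) = 0 := by
        rw [← hΦaf]; exact hex1.apply_apply_eq_zero _
      have hsub : κ (m, g) - κ (m - τ a, 0) = κ (τ a, g) := by
        rw [← map_sub]
        congr 1
        exact Prod.ext (by simp) (by simp)
      rw [hz, sub_eq_zero] at hsub
      show κ (m - τ a, 0) = p
      rw [← hsub, hmg]
    · rintro ⟨m, rfl⟩
      show (d (κ (m, 0))).1 = 0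
      rw [hex2.apply_apply_eq_zero (m, (0 : ℕ →₀ L))]
      rfl
  · -- exact at J' : π∘d then σ'
    intro j
    constructor
    · intro h
      have h0 : Φ' (j, 0, 0) = 0 := by
        rw [key1' j, h]
        rfl
      obtain ⟨p, hp⟩ := (hex3 (j, (0 : L'), (0 : ℕ →₀ L'))).mp h0
      exact ⟨p, show (d p).1 = j by rw [hp]⟩
    · rintro ⟨p, rfl⟩
      show σ' (d p).1 = 0
      have h0 : Φ' (d p) = 0 := hex3.apply_apply_eq_zero p
      have hrw : ((d p).1, (d p).2.1, (d p).2.2) = d p := rfl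
      have ha := hΦ'a (d p).1 (d p).2.1 (d p).2.2
      rw [hrw, h0] at ha
      obtain ⟨ha2, -⟩ := key2 p
      rw [ha2, map_zero, add_zero] at ha
      simp only [Prod.fst_zero] at ha
      exact ha.symm


/-- **The ten-term diagram argument (covariant case).**
For `i ∈ {0,1}` let `Jⁱ, Lⁱ, Mⁱ, Pⁱ` be abelian groups, `σⁱ : Jⁱ → Mⁱ`, `τⁱ : Lⁱ → Mⁱ`
group homomorphisms, `Gⁱ := Jⁱ ⊕ Lⁱ ⊕ (⨁_{n≥1} Lⁱ)`, `Hⁱ := Mⁱ ⊕ (⨁_{n≥1} Lⁱ)` (with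
`⨁_{n≥1} L` modelled by `ℕ →₀ L`), and let `Φⁱ : Gⁱ → Hⁱ` be given by
`Φⁱ(j, a, (f_n)) = (σⁱ(j) + τⁱ(a), f₁ − a, f₂ − f₁, …)`.  Suppose `κⁱ : Hⁱ → Pⁱ` and
`∂ⁱ : Pⁱ → G^{1−i}` make the cyclic six-term sequence
`G⁰ → H⁰ → P⁰ → G¹ → H¹ → P¹ → G⁰` exact at every term.  With `ℓⁱ(m) = (m,0)` and
`πⁱ(j,a,f) = j`, the cyclic six-term sequence
`J⁰ →^{σ⁰} M⁰ →^{κ⁰∘ℓ⁰} P⁰ →^{π¹∘∂⁰} J¹ →^{σ¹} M¹ →^{κ¹∘ℓ¹} P¹ →^{π⁰∘∂¹} J⁰`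
is exact at every term. -/
theorem ten_term_diagram_covariant
    {J0 L0 M0 P0 J1 L1 M1 P1 : Type*}
    [AddCommGroup J0] [AddCommGroup L0] [AddCommGroup M0] [AddCommGroup P0]
    [AddCommGroup J1] [AddCommGroup L1] [AddCommGroup M1] [AddCommGroup P1]
    (σ0 : J0 →+ M0) (τ0 : L0 →+ M0) (σ1 : J1 →+ M1) (τ1 : L1 →+ M1)
    (Φ0 : J0 × L0 × (ℕ →₀ L0) →+ M0 × (ℕ →₀ L0))
    (hΦ0a : ∀ (j : J0) (a : L0) (f : ℕ →₀ L0), (Φ0 (j, a, f)).1 = σ0 j + τ0 a)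
    (hΦ0b : ∀ (j : J0) (a : L0) (f : ℕ →₀ L0), (Φ0 (j, a, f)).2 0 = f 0 - a)
    (hΦ0c : ∀ (j : J0) (a : L0) (f : ℕ →₀ L0) (n : ℕ),
      (Φ0 (j, a, f)).2 (n + 1) = f (n + 1) - f n)
    (Φ1 : J1 × L1 × (ℕ →₀ L1) →+ M1 × (ℕ →₀ L1))
    (hΦ1a : ∀ (j : J1) (a : L1) (f : ℕ →₀ L1), (Φ1 (j, a, f)).1 = σ1 j + τ1 a)
    (hΦ1b : ∀ (j : J1) (a : L1) (f : ℕ →₀ L1), (Φ1 (j, a, f)).2 0 = f 0 - a)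
    (hΦ1c : ∀ (j : J1) (a : L1) (f : ℕ →₀ L1) (n : ℕ),
      (Φ1 (j, a, f)).2 (n + 1) = f (n + 1) - f n)
    (κ0 : M0 × (ℕ →₀ L0) →+ P0) (κ1 : M1 × (ℕ →₀ L1) →+ P1)
    (d0 : P0 →+ J1 × L1 × (ℕ →₀ L1)) (d1 : P1 →+ J0 × L0 × (ℕ →₀ L0))
    (hex1 : Function.Exact ⇑Φ0 ⇑κ0)
    (hex2 : Function.Exact ⇑κ0 ⇑d0)
    (hex3 : Function.Exact ⇑d0 ⇑Φ1)
    (hex4 : Function.Exact ⇑Φ1 ⇑κ1)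
    (hex5 : Function.Exact ⇑κ1 ⇑d1)
    (hex6 : Function.Exact ⇑d1 ⇑Φ0) :
    Function.Exact ⇑σ0 (fun m : M0 => κ0 (m, 0)) ∧
    Function.Exact (fun m : M0 => κ0 (m, 0)) (fun p : P0 => (d0 p).1) ∧
    Function.Exact (fun p : P0 => (d0 p).1) ⇑σ1 ∧
    Function.Exact ⇑σ1 (fun m : M1 => κ1 (m, 0)) ∧
    Function.Exact (fun m : M1 => κ1 (m, 0)) (fun p : P1 => (d1 p).1) ∧
    Function.Exact (fun p : P1 => (d1 p).1) ⇑σ0 := by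
  obtain ⟨e1, e2, e3⟩ := three_exact σ0 τ0 σ1 τ1 Φ0 hΦ0a hΦ0b hΦ0c Φ1 hΦ1a hΦ1b hΦ1c
    κ0 d0 hex1 hex2 hex3
  obtain ⟨e4, e5, e6⟩ := three_exact σ1 τ1 σ0 τ0 Φ1 hΦ1a hΦ1b hΦ1c Φ0 hΦ0a hΦ0b hΦ0c
    κ1 d1 hex4 hex5 hex6
  exact ⟨e1, e2, e3, e4, e5, e6⟩
end

section
/- Let J⁰, J¹, L⁰, L¹, M⁰, M¹, P⁰, P¹ be abelian groups, and for i ∈ {0,1} let uⁱ : Mⁱ → Jⁱ and λⁱ : Mⁱ → Lⁱ be group homomorphisms. Set Hⁱ := Mⁱ ⊕ (∏_{n≥1} Lⁱ) and Gⁱ := Jⁱ ⊕ Lⁱ ⊕ (∏_{n≥1} Lⁱ), and define Ψⁱ : Hⁱ → Gⁱ by Ψⁱ(a, (f_n)_{n≥1}) = (uⁱ(a), λⁱ(a) − f₁, f₁ − f₂, f₂ − f₃, …). Suppose that ρⁱ : Pⁱ → Hⁱ and ∂ⁱ : Gⁱ → P^{1−i} are group homomorphisms such that the cyclic six-term sequence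 P⁰ →^{ρ⁰} H⁰ →^{Ψ⁰} G⁰ →^{∂⁰} P¹ →^{ρ¹} H¹ →^{Ψ¹} G¹ →^{∂¹} P⁰ is exact at every term. Let prⁱ : Hⁱ → Mⁱ be the projection onto the first summand and ℓⁱ : Jⁱ → Gⁱ the inclusion j ↦ (j, 0, 0). Then the cyclic six-term sequence P⁰ →^{pr⁰∘ρ⁰} M⁰ →^{u⁰} J⁰ →^{∂⁰∘ℓ⁰} P¹ →^{pr¹∘ρ¹} M¹ →^{u¹} J¹ →^{∂¹∘ℓ¹} P⁰ is exact at every term. -/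
private lemma psi_zero {M L J : Type*} [AddCommGroup M] [AddCommGroup L] [AddCommGroup J]
    (u : M →+ J) (lam : M →+ L)
    (Ψ : M × (ℕ → L) →+ J × L × (ℕ → L))
    (hΨ : ∀ (a : M) (f : ℕ → L), Ψ (a, f) = (u a, lam a - f 0, fun n => f n - f (n + 1)))
    (l : L) (h : ℕ → L) : ((0 : J), l, h) ∈ Set.range Ψ := by
  refine ⟨(0, fun n => Nat.rec (-l) (fun n fn => fn - h n) n), ?_⟩
  rw [hΨ]
  refine Prod.ext (by simp) (Prod.ext (by simp) ?_)
  funext n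
  show (Nat.rec (-l) (fun n fn => fn - h n) n : L) -
      (Nat.rec (-l) (fun n fn => fn - h n) n - h n) = h n
  abel

private lemma exA {M L J P : Type*} [AddCommGroup M] [AddCommGroup L] [AddCommGroup J]
    [AddCommGroup P]
    (u : M →+ J) (lam : M →+ L) (Ψ : M × (ℕ → L) →+ J × L × (ℕ → L))
    (hΨ : ∀ (a : M) (f : ℕ → L), Ψ (a, f) = (u a, lam a - f 0, fun n => f n - f (n + 1)))
    (ρ : P →+ M × (ℕ → L)) (hex : Function.Exact ⇑ρ ⇑Ψ) :
    Function.Exact (fun p : P => (ρ p).1) ⇑u := by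
  intro a
  constructor
  · intro ha
    have hz : Ψ (a, fun _ => lam a) = 0 := by
      rw [hΨ]
      exact Prod.ext ha (Prod.ext (by simp) (by funext n; simp))
    obtain ⟨p, hp⟩ := (hex _).mp hz
    exact ⟨p, by show (ρ p).1 = a; rw [hp]⟩
  · rintro ⟨p, rfl⟩
    have h0 : Ψ (ρ p) = 0 := hex.apply_apply_eq_zero p
    have heq := hΨ (ρ p).1 (ρ p).2
    rw [Prod.mk.eta] at heq
    rw [heq] at h0
    exact congrArg Prod.fst h0

private lemma exB {M L J P : Type*} [AddCommGroup M] [AddCommGroup L] [AddCommGroup J]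
    [AddCommGroup P]
    (u : M →+ J) (lam : M →+ L) (Ψ : M × (ℕ → L) →+ J × L × (ℕ → L))
    (hΨ : ∀ (a : M) (f : ℕ → L), Ψ (a, f) = (u a, lam a - f 0, fun n => f n - f (n + 1)))
    (d : J × L × (ℕ → L) →+ P) (hex : Function.Exact ⇑Ψ ⇑d) :
    Function.Exact ⇑u (fun j : J => d (j, 0, 0)) := by
  intro j
  constructor
  · intro hj
    obtain ⟨⟨a, f⟩, hf⟩ := (hex _).mp hj
    rw [hΨ] at hf
    exact ⟨a, congrArg Prod.fst hf⟩
  · rintro ⟨a, rfl⟩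
    refine (hex _).mpr ⟨(a, fun _ => lam a), ?_⟩
    rw [hΨ]
    exact Prod.ext rfl (Prod.ext (by simp) (by funext n; simp))

private lemma exC {J L M J' L' M' P : Type*}
    [AddCommGroup J] [AddCommGroup L] [AddCommGroup M]
    [AddCommGroup J'] [AddCommGroup L'] [AddCommGroup M'] [AddCommGroup P]
    (u : M →+ J) (lam : M →+ L) (Ψ : M × (ℕ → L) →+ J × L × (ℕ → L))
    (hΨ : ∀ (a : M) (f : ℕ → L), Ψ (a, f) = (u a, lam a - f 0, fun n => f n - f (n + 1)))
    (u' : M' →+ J') (lam' : M' →+ L') (Ψ' : M' × (ℕ → L') →+ J' × L' × (ℕ → L'))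
    (hΨ' : ∀ (a : M') (f : ℕ → L'), Ψ' (a, f) = (u' a, lam' a - f 0, fun n => f n - f (n + 1)))
    (d : J × L × (ℕ → L) →+ P) (ρ' : P →+ M' × (ℕ → L'))
    (hexd : Function.Exact ⇑Ψ ⇑d) (hex3 : Function.Exact ⇑d ⇑ρ')
    (hex4 : Function.Exact ⇑ρ' ⇑Ψ') :
    Function.Exact (fun j : J => d (j, 0, 0)) (fun p : P => (ρ' p).1) := by
  intro p
  constructor
  · intro hp
    replace hp : (ρ' p).1 = 0 := hp
    have h0 : Ψ' (ρ' p) = 0 := hex4.apply_apply_eq_zero p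
    have heq := hΨ' (ρ' p).1 (ρ' p).2
    rw [Prod.mk.eta] at heq
    rw [heq, hp] at h0
    have hf0 : (ρ' p).2 0 = 0 := by
      have := congrArg (fun x => x.2.1) h0
      simpa using this.symm
    have hstep : ∀ n, (ρ' p).2 n = (ρ' p).2 (n + 1) := by
      intro n
      have := congrArg (fun x => x.2.2 n) h0
      simpa [sub_eq_zero] using this
    have hall : (ρ' p).2 = 0 := by
      funext n
      induction n with
      | zero => exact hf0
      | succ n ih => rw [← hstep n]; exact ih
    have hρ : ρ' p = 0 := by
      rw [← Prod.mk.eta (p := ρ' p), hp, hall]; rfl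
    obtain ⟨⟨j, l, h⟩, rfl⟩ := (hex3 p).mp hρ
    refine ⟨j, ?_⟩
    have hz : d ((0 : J), l, h) = 0 := (hexd _).mpr (psi_zero u lam Ψ hΨ l h)
    have hsplit : ((j : J), l, h) = ((j, 0, 0) : J × L × (ℕ → L)) + (0, l, h) := by
      simp [Prod.ext_iff]
    rw [hsplit, map_add, hz, add_zero]
  · rintro ⟨j, rfl⟩
    show (ρ' (d (j, 0, 0))).1 = 0
    rw [hex3.apply_apply_eq_zero]; rfl

/-- **The ten-term diagram argument (contravariant case).**
For `i ∈ {0,1}` let `Jⁱ, Lⁱ, Mⁱ, Pⁱ` be abelian groups, `uⁱ : Mⁱ → Jⁱ`, `λⁱ : Mⁱ → Lⁱ`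
group homomorphisms, `Hⁱ := Mⁱ ⊕ (∏_{n≥1} Lⁱ)`, `Gⁱ := Jⁱ ⊕ Lⁱ ⊕ (∏_{n≥1} Lⁱ)` (with
`∏_{n≥1} L` modelled by `ℕ → L`), and let `Ψⁱ : Hⁱ → Gⁱ` be given by
`Ψⁱ(a, (f_n)) = (uⁱ(a), λⁱ(a) − f₁, f₁ − f₂, f₂ − f₃, …)`.  Suppose `ρⁱ : Pⁱ → Hⁱ` and
`∂ⁱ : Gⁱ → P^{1−i}` make the cyclic six-term sequence
`P⁰ → H⁰ → G⁰ → P¹ → H¹ → G¹ → P⁰` exact at every term.  With `prⁱ(a,f) = a` and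
`ℓⁱ(j) = (j,0,0)`, the cyclic six-term sequence
`P⁰ →^{pr⁰∘ρ⁰} M⁰ →^{u⁰} J⁰ →^{∂⁰∘ℓ⁰} P¹ →^{pr¹∘ρ¹} M¹ →^{u¹} J¹ →^{∂¹∘ℓ¹} P⁰`
is exact at every term. -/
theorem ten_term_diagram_contravariant
    {J0 L0 M0 P0 J1 L1 M1 P1 : Type*}
    [AddCommGroup J0] [AddCommGroup L0] [AddCommGroup M0] [AddCommGroup P0]
    [AddCommGroup J1] [AddCommGroup L1] [AddCommGroup M1] [AddCommGroup P1]
    (u0 : M0 →+ J0) (lam0 : M0 →+ L0) (u1 : M1 →+ J1) (lam1 : M1 →+ L1)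
    (Ψ0 : M0 × (ℕ → L0) →+ J0 × L0 × (ℕ → L0))
    (hΨ0 : ∀ (a : M0) (f : ℕ → L0),
      Ψ0 (a, f) = (u0 a, lam0 a - f 0, fun n => f n - f (n + 1)))
    (Ψ1 : M1 × (ℕ → L1) →+ J1 × L1 × (ℕ → L1))
    (hΨ1 : ∀ (a : M1) (f : ℕ → L1),
      Ψ1 (a, f) = (u1 a, lam1 a - f 0, fun n => f n - f (n + 1)))
    (ρ0 : P0 →+ M0 × (ℕ → L0)) (ρ1 : P1 →+ M1 × (ℕ → L1))
    (d0 : J0 × L0 × (ℕ → L0) →+ P1) (d1 : J1 × L1 × (ℕ → L1) →+ P0)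
    (hex1 : Function.Exact ⇑ρ0 ⇑Ψ0)
    (hex2 : Function.Exact ⇑Ψ0 ⇑d0)
    (hex3 : Function.Exact ⇑d0 ⇑ρ1)
    (hex4 : Function.Exact ⇑ρ1 ⇑Ψ1)
    (hex5 : Function.Exact ⇑Ψ1 ⇑d1)
    (hex6 : Function.Exact ⇑d1 ⇑ρ0) :
    Function.Exact (fun p : P0 => (ρ0 p).1) ⇑u0 ∧
    Function.Exact ⇑u0 (fun j : J0 => d0 (j, 0, 0)) ∧
    Function.Exact (fun j : J0 => d0 (j, 0, 0)) (fun p : P1 => (ρ1 p).1) ∧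
    Function.Exact (fun p : P1 => (ρ1 p).1) ⇑u1 ∧
    Function.Exact ⇑u1 (fun j : J1 => d1 (j, 0, 0)) ∧
    Function.Exact (fun j : J1 => d1 (j, 0, 0)) (fun p : P0 => (ρ0 p).1) := by
  refine ⟨exA u0 lam0 Ψ0 hΨ0 ρ0 hex1,
    exB u0 lam0 Ψ0 hΨ0 d0 hex2,
    exC u0 lam0 Ψ0 hΨ0 u1 lam1 Ψ1 hΨ1 d0 ρ1 hex2 hex3 hex4,
    exA u1 lam1 Ψ1 hΨ1 ρ1 hex4,
    exB u1 lam1 Ψ1 hΨ1 d1 hex5,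
    exC u1 lam1 Ψ1 hΨ1 u0 lam0 Ψ0 hΨ0 d1 ρ0 hex5 hex6 hex1⟩
end
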